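/- Let g_1,…,g_n ∈ ℝ^d with d ≥ 1. Then inf over symmetric positive definite d×d matrices H with trace at most d of Σ_{τ=1}^n g_τᵀ H⁻¹ g_τ is at most (1/d)·( Σ_{i=1}^d √( Σ_{τ=1}^n g_{τ,i}² ) )², where g_{τ,i} is the i-th coordinate of g_τ. -/

import Mathlib

/-!
The diagonal preconditioner `H = d · diag a / ∑ a` with `aᵢ = √(∑_τ g_{τ,i}²)` has trace `d` and
gives `∑_τ gᵀ H⁻¹ g = (∑ a / d) · ∑ᵢ aᵢ² / aᵢ = (∑ a)² / d`. Since some `aᵢ` may vanish, one uses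
`a + c` instead, which costs at most `c · ∑ a`, and lets `c → 0⁺`.
-/

open Finset Matrix Filter Topology

theorem sq_div_le_self {K : Type*} [Field K] [LinearOrder K] [IsStrictOrderedRing K] {a b : K}
    (ha : 0 ≤ a) (hab : a ≤ b) : a ^ 2 / b ≤ a := by
  rw [sq, mul_div_assoc]
  exact mul_le_of_le_one_right ha (div_le_one_of_le₀ hab (ha.trans hab))

namespace Matrix

variable {ι : Type*} [Fintype ι]

theorem sum_sum_mul_mul_eq_dotProduct_mulVec {R : Type*} [CommSemiring R] (A : Matrix ι ι R)
    (x : ι → R) : ∑ i, ∑ j, x i * A i j * x j = x ⬝ᵥ A *ᵥ x := by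
  simp only [dotProduct, mulVec, mul_sum, mul_assoc]

theorem card_mul_div_sum_pos {b : ι → ℝ} (hb : ∀ i, 0 < b i) (i : ι) :
    0 < Fintype.card ι * b i / ∑ j, b j := by
  have : Nonempty ι := ⟨i⟩
  have hcard : (0 : ℝ) < Fintype.card ι := Nat.cast_pos.mpr Fintype.card_pos
  exact div_pos (mul_pos hcard (hb i)) (sum_pos (fun j _ => hb j) univ_nonempty)

variable [DecidableEq ι]

theorem PosDef.sum_sum_mul_inv_mul_nonneg {A : Matrix ι ι ℝ} (hA : A.PosDef) (x : ι → ℝ) :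
    0 ≤ ∑ i, ∑ j, x i * A⁻¹ i j * x j := by
  rw [sum_sum_mul_mul_eq_dotProduct_mulVec]
  exact hA.inv.posSemidef.dotProduct_mulVec_nonneg x

theorem sum_sum_mul_inv_diagonal_mul {h : ι → ℝ} (hh : ∀ i, h i ≠ 0) (x : ι → ℝ) :
    ∑ i, ∑ j, x i * (diagonal h)⁻¹ i j * x j = ∑ i, x i ^ 2 / h i := by
  have hinv : (diagonal h)⁻¹ = diagonal h⁻¹ := by
    refine inv_eq_right_inv ?_
    rw [diagonal_mul_diagonal, ← diagonal_one]
    exact congrArg diagonal (funext fun i => mul_inv_cancel₀ (hh i))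
  simp only [hinv, diagonal_apply, Pi.inv_apply, mul_ite, mul_zero, ite_mul, zero_mul, sum_ite_eq,
    mem_univ, ↓reduceIte]
  exact sum_congr rfl fun i _ => by ring

noncomputable def traceNormalizedDiagonal (b : ι → ℝ) : Matrix ι ι ℝ :=
  diagonal fun i => Fintype.card ι * b i / ∑ j, b j

theorem trace_traceNormalizedDiagonal_le (b : ι → ℝ) :
    (traceNormalizedDiagonal b).trace ≤ Fintype.card ι := by
  rw [traceNormalizedDiagonal, trace_diagonal, ← sum_div, ← mul_sum, mul_div_assoc]
  exact mul_le_of_le_one_right (Nat.cast_nonneg _) (div_self_le_one _)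

variable {b : ι → ℝ}

theorem posDef_traceNormalizedDiagonal (hb : ∀ i, 0 < b i) :
    (traceNormalizedDiagonal b).PosDef :=
  .diagonal (card_mul_div_sum_pos hb)

theorem sum_sum_sum_mul_inv_traceNormalizedDiagonal_mul {κ : Type*} [Fintype κ]
    (hb : ∀ i, 0 < b i) (g : κ → ι → ℝ) :
    ∑ τ, ∑ i, ∑ j, g τ i * (traceNormalizedDiagonal b)⁻¹ i j * g τ j =
      (∑ j, b j) / Fintype.card ι * ∑ i, (∑ τ, g τ i ^ 2) / b i := by
  simp only [traceNormalizedDiagonal,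
    sum_sum_mul_inv_diagonal_mul fun i => (card_mul_div_sum_pos hb i).ne']
  rw [sum_comm, mul_sum]
  refine sum_congr rfl fun i _ => ?_
  rw [← sum_div, div_div_eq_mul_div]
  ring

end Matrix

theorem full_matrix_inf_le_diagonal_quantity_general
    (d n : ℕ) (g : Fin n → Fin d → ℝ) :
    sInf {v : ℝ | ∃ H : Matrix (Fin d) (Fin d) ℝ, H.PosDef ∧ H.trace ≤ (d : ℝ) ∧
        v = ∑ τ, ∑ i, ∑ j, g τ i * H⁻¹ i j * g τ j} ≤
      (1 / d) * (∑ i, Real.sqrt (∑ τ, (g τ i) ^ 2)) ^ 2 := by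
  set V := {v : ℝ | ∃ H : Matrix (Fin d) (Fin d) ℝ, H.PosDef ∧ H.trace ≤ (d : ℝ) ∧
    v = ∑ τ, ∑ i, ∑ j, g τ i * H⁻¹ i j * g τ j}
  set a : Fin d → ℝ := fun i => Real.sqrt (∑ τ, g τ i ^ 2)
  set S := ∑ i, a i
  have hbdd : BddBelow V :=
    ⟨0, by rintro _ ⟨H, hH, -, rfl⟩; exact sum_nonneg fun τ _ => hH.sum_sum_mul_inv_mul_nonneg _⟩
  have hle : ∀ c > 0, sInf V ≤ (S + d * c) / d * S := by
    intro c hc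
    have hb : ∀ i, 0 < a i + c := fun i => add_pos_of_nonneg_of_pos (Real.sqrt_nonneg _) hc
    refine (csInf_le hbdd ⟨_, posDef_traceNormalizedDiagonal hb, by
      simpa using trace_traceNormalizedDiagonal_le (fun i => a i + c), rfl⟩).trans ?_
    rw [sum_sum_sum_mul_inv_traceNormalizedDiagonal_mul hb, sum_add_distrib]
    simp only [sum_const, card_univ, Fintype.card_fin, nsmul_eq_mul]
    refine mul_le_mul_of_nonneg_left (sum_le_sum fun i _ => ?_) (by positivity)
    rw [← Real.sq_sqrt (sum_nonneg fun τ _ => sq_nonneg (g τ i))]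
    exact sq_div_le_self (Real.sqrt_nonneg _) (le_add_of_nonneg_right hc.le)
  have htendsto : Tendsto (fun c => (S + d * c) / d * S) (𝓝[>] 0) (𝓝 ((1 / d) * S ^ 2)) :=
    (Continuous.tendsto' (by fun_prop) 0 _ (by ring)).mono_left nhdsWithin_le_nhds
  exact ge_of_tendsto htendsto (eventually_nhdsWithin_of_forall hle)

theorem full_matrix_inf_le_diagonal_quantity
    (d n : ℕ) (hd : 1 ≤ d) (g : Fin n → Fin d → ℝ) :
    sInf {v : ℝ | ∃ H : Matrix (Fin d) (Fin d) ℝ, H.PosDef ∧ H.trace ≤ (d : ℝ) ∧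
        v = ∑ τ, ∑ i, ∑ j, g τ i * H⁻¹ i j * g τ j} ≤
      (1 / d) * (∑ i, Real.sqrt (∑ τ, (g τ i) ^ 2)) ^ 2 :=
  full_matrix_inf_le_diagonal_quantity_general d n g
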